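/- Let A be a super-commutative Hopf superalgebra over a field. Then the antipode s of A is an involution (s ∘ s = id), and consequently the antipode S of the bosonization = A ⋊ kZ₂, given by S(a ⊗ σ^i) = (−1)^{i+|a|} s(a) ⊗ σ^{i+|a|}, is bijective. -/

import Mathlib

open TensorProduct

/-- A (not necessarily super-commutative) Hopf superalgebra over `k`:
a `ℤ/2`-graded `k`-module (the grading being given by the pair of projections
`p 0`, `p 1`), equipped with a graded multiplication `mul`, unit `one`, graded
comultiplication `comul`, counit `counit` and antipode `antipode`, where the
compatibility of `comul` with `mul` involves the super-sign
`(a ⊗ b)(c ⊗ d) = (−1)^{|b||c|} ac ⊗ bd`. -/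
structure HopfSuperalgebra (k : Type*) [CommRing k] (A : Type*)
    [AddCommGroup A] [Module k A] where
  p : ZMod 2 → A →ₗ[k] A
  p_sum : p 0 + p 1 = LinearMap.id
  p_orth : ∀ i j : ZMod 2, i ≠ j → (p i) ∘ₗ (p j) = 0
  mul : A →ₗ[k] A →ₗ[k] A
  one : A
  mul_assoc : ∀ a b c : A, mul (mul a b) c = mul a (mul b c)
  one_mul : ∀ a : A, mul one a = a
  mul_one : ∀ a : A, mul a one = a
  mul_grading : ∀ (i j : ZMod 2) (a b : A),
    p (i + j) (mul (p i a) (p j b)) = mul (p i a) (p j b)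
  one_grading : p 0 one = one
  comul : A →ₗ[k] A ⊗[k] A
  counit : A →ₗ[k] k
  coassoc : ∀ a : A,
    (TensorProduct.assoc k A A A)
      ((TensorProduct.map comul (LinearMap.id : A →ₗ[k] A)) (comul a)) =
    (TensorProduct.map (LinearMap.id : A →ₗ[k] A) comul) (comul a)
  counit_comul : ∀ a : A,
    (TensorProduct.lid k A)
      ((TensorProduct.map counit (LinearMap.id : A →ₗ[k] A)) (comul a)) = a
  comul_counit : ∀ a : A,
    (TensorProduct.rid k A)
      ((TensorProduct.map (LinearMap.id : A →ₗ[k] A) counit) (comul a)) = a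
  comul_grading : ∀ l : ZMod 2,
    comul ∘ₗ p l = ∑ i : ZMod 2, (TensorProduct.map (p i) (p (l - i))) ∘ₗ comul
  comul_one : comul one = one ⊗ₜ[k] one
  counit_one : counit one = 1
  counit_mul : ∀ a b : A, counit (mul a b) = counit a * counit b
  counit_grading : counit ∘ₗ p 1 = 0
  comul_mul : ∀ a b : A, comul (mul a b) =
    ∑ i : ZMod 2, ∑ j : ZMod 2, ((-1 : ℤ) ^ (i.val * j.val)) •
      (TensorProduct.homTensorHomMap (RingHom.id k) A A A A
        ((TensorProduct.map mul mul)
          ((TensorProduct.map (LinearMap.id : A →ₗ[k] A) (p i)) (comul a))))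
        ((TensorProduct.map (p j) (LinearMap.id : A →ₗ[k] A)) (comul b))
  antipode : A →ₗ[k] A
  antipode_left : ∀ a : A,
    (TensorProduct.lift mul)
      ((TensorProduct.map antipode (LinearMap.id : A →ₗ[k] A)) (comul a))
      = counit a • one
  antipode_right : ∀ a : A,
    (TensorProduct.lift mul)
      ((TensorProduct.map (LinearMap.id : A →ₗ[k] A) antipode) (comul a))
      = counit a • one

namespace HopfSuperalgebra

variable {k A : Type*} [CommRing k] [AddCommGroup A] [Module k A]

/-- Super-commutativity: for homogeneous `a`, `b` one has
`ab = (−1)^{|a||b|} ba` (which, in the presence of the grading axioms, is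
equivalent to `R₀` being central and odd squares vanishing). -/
def IsSupercommutative (H : HopfSuperalgebra k A) : Prop :=
  ∀ (i j : ZMod 2) (a b : A),
    H.mul (H.p i a) (H.p j b) =
      ((-1 : ℤ) ^ (i.val * j.val)) • H.mul (H.p j b) (H.p i a)

/-- The convolution product `ξ * η` on the dual space `A* = Hom_k(A, k)`. -/
noncomputable def conv (H : HopfSuperalgebra k A) (ξ η : A →ₗ[k] k) :
    A →ₗ[k] k :=
  (LinearMap.mul' k k) ∘ₗ (TensorProduct.map ξ η) ∘ₗ H.comul

/-- `φ` is a left integral: `ξ φ = ξ(1) φ` for all `ξ ∈ A*`. -/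
def IsLeftIntegral (H : HopfSuperalgebra k A) (φ : A →ₗ[k] k) : Prop :=
  ∀ ξ : A →ₗ[k] k, H.conv ξ φ = ξ H.one • φ

/-- `φ` is a right integral: `φ ξ = ξ(1) φ` for all `ξ ∈ A*`. -/
def IsRightIntegral (H : HopfSuperalgebra k A) (φ : A →ₗ[k] k) : Prop :=
  ∀ ξ : A →ₗ[k] k, H.conv φ ξ = ξ H.one • φ

end HopfSuperalgebra

namespace HopfSuperalgebra

variable {k A : Type*} [CommRing k] [AddCommGroup A] [Module k A]

/-- The bosonization `Â = A ⊗ kZ₂` is modelled on `A × A`, the first component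
being the coefficient of `σ⁰ = e` and the second that of `σ`.  `slot i` embeds
`A` as `A ⊗ σ^i`. -/
def slot (k : Type*) [CommRing k] (A : Type*) [AddCommGroup A] [Module k A]
    (i : ZMod 2) : A →ₗ[k] A × A :=
  if i = 0 then LinearMap.inl k A A else LinearMap.inr k A A

/-- The smash-coproduct comultiplication of the bosonization `Â = A ⊗ kZ₂`,
`Δ(a ⊗ σ^i) = Σ (a₍₁₎ ⊗ σ^{i+|a₍₂₎|}) ⊗ (a₍₂₎ ⊗ σ^i)`. -/
noncomputable def hatComul (H : HopfSuperalgebra k A) :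
    (A × A) →ₗ[k] (A × A) ⊗[k] (A × A) :=
  (∑ j : ZMod 2,
      (TensorProduct.map (slot k A ((0 : ZMod 2) + j))
        ((slot k A 0) ∘ₗ H.p j)) ∘ₗ H.comul) ∘ₗ LinearMap.fst k A A
  + (∑ j : ZMod 2,
      (TensorProduct.map (slot k A ((1 : ZMod 2) + j))
        ((slot k A 1) ∘ₗ H.p j)) ∘ₗ H.comul) ∘ₗ LinearMap.snd k A A

/-- The unit `1 ⊗ e` of the bosonization. -/
def hatOne (H : HopfSuperalgebra k A) : A × A := (H.one, 0)

/-- `φ : Â → k` is a map of right `Â`-comodules (where `k` is the trivial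
comodule), i.e. `Σ φ(x₍₁₎) x₍₂₎ = φ(x) 1` for all `x ∈ Â`. -/
def IsHatComoduleMap (H : HopfSuperalgebra k A) (φ : A × A →ₗ[k] k) : Prop :=
  ∀ x : A × A,
    (TensorProduct.lid k (A × A))
      ((TensorProduct.map φ (LinearMap.id : A × A →ₗ[k] A × A))
        (H.hatComul x)) = φ x • H.hatOne

/-- `ψ : A → k` is a map of right `A`-supercomodules (`k` trivial), i.e.
`Σ ψ(a₍₁₎) a₍₂₎ = ψ(a) 1` for all `a ∈ A`. -/
def IsComoduleMap (H : HopfSuperalgebra k A) (ψ : A →ₗ[k] k) : Prop :=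
  ∀ a : A,
    (TensorProduct.lid k A)
      ((TensorProduct.map ψ (LinearMap.id : A →ₗ[k] A)) (H.comul a))
      = ψ a • H.one

end HopfSuperalgebra

namespace HopfSuperalgebra

variable {k A : Type*} [CommRing k] [AddCommGroup A] [Module k A]

/-- The antipode `S` of the bosonization `Â = A ⋊ kZ₂` (modelled on `A × A`),
given by `S(a ⊗ σ^i) = (−1)^{i+|a|} s(a) ⊗ σ^{i+|a|}`, where `s` is the
antipode of `A`. -/
def hatAntipode (H : HopfSuperalgebra k A) : A × A →ₗ[k] A × A :=
  LinearMap.prod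
    ((H.antipode ∘ₗ H.p 0) ∘ₗ LinearMap.fst k A A
      + (H.antipode ∘ₗ H.p 1) ∘ₗ LinearMap.snd k A A)
    (-((H.antipode ∘ₗ H.p 1) ∘ₗ LinearMap.fst k A A)
      - (H.antipode ∘ₗ H.p 0) ∘ₗ LinearMap.snd k A A)

end HopfSuperalgebra

open HopfSuperalgebra

/-!
The antipode `s` is even: writing `s = s₀ + s₁` with `s₀` even and `s₁` odd, the odd part `s₁ ⋆ id`
of `s ⋆ id = ε·1` vanishes, so `s₀` is a left convolution inverse of `id` and hence equals `s`.

Give `A ⊗ A` the super tensor coalgebra structure, whose comultiplication carries the Koszul sign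
`(a₁ ⊗ a₂) ⊗ (b₁ ⊗ b₂) ↦ (-1)^{|a₂||b₁|} (a₁ ⊗ b₁) ⊗ (a₂ ⊗ b₂)`. Multiplicativity of `Δ` makes
`s ∘ μ` a right convolution inverse of the multiplication `μ : A ⊗ A → A`, and super-commutativity
makes `μ ∘ (s ⊗ s)` a left one, so `s` is multiplicative. Then `s ∘ s` is a right convolution
inverse of `s`, whence `s ∘ s = id`. Consequently `S ∘ S` acts on `A ⊗ kZ₂` as the parity
automorphism `a ↦ (-1)^{|a|} a` in each component, so `S⁴ = id`.
-/

lemma zmod_two_cases (i : ZMod 2) : i = 0 ∨ i = 1 := by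
  revert i; decide

lemma sum_zmod_two {M : Type*} [AddCommMonoid M] (f : ZMod 2 → M) :
    ∑ i : ZMod 2, f i = f 0 + f 1 :=
  Fin.sum_univ_two f

namespace HopfSuperalgebra

variable {k A : Type*} [CommRing k] [AddCommGroup A] [Module k A] (H : HopfSuperalgebra k A)

section Grading

lemma p_zero_add_p_one (a : A) : H.p 0 a + H.p 1 a = a := by
  simpa using LinearMap.congr_fun H.p_sum a

lemma p_p_of_ne {i j : ZMod 2} (h : i ≠ j) (a : A) : H.p i (H.p j a) = 0 := by
  simpa using LinearMap.congr_fun (H.p_orth i j h) a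

@[simp] lemma p_zero_p_one (a : A) : H.p 0 (H.p 1 a) = 0 := H.p_p_of_ne (by decide) a

@[simp] lemma p_one_p_zero (a : A) : H.p 1 (H.p 0 a) = 0 := H.p_p_of_ne (by decide) a

@[simp] lemma p_p (i : ZMod 2) (a : A) : H.p i (H.p i a) = H.p i a := by
  have h := H.p_zero_add_p_one (H.p i a)
  obtain rfl | rfl := zmod_two_cases i <;> simpa using h

@[simp] lemma counit_p_one (a : A) : H.counit (H.p 1 a) = 0 :=
  LinearMap.congr_fun H.counit_grading a

@[simp] lemma counit_p_zero (a : A) : H.counit (H.p 0 a) = H.counit a := by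
  conv_rhs => rw [← H.p_zero_add_p_one a]
  simp

lemma p_add_p_add_one (i : ZMod 2) (a : A) : H.p i a + H.p (i + 1) a = a := by
  obtain rfl | rfl := zmod_two_cases i
  · simpa using H.p_zero_add_p_one a
  · simpa [show (1 + 1 : ZMod 2) = 0 by decide, add_comm] using H.p_zero_add_p_one a

lemma comul_p (i : ZMod 2) (a : A) :
    H.comul (H.p i a) = ∑ m : ZMod 2, map (H.p m) (H.p (i - m)) (H.comul a) := by
  simpa using LinearMap.congr_fun (H.comul_grading i) a

end Grading

section Convolution

variable {C : Type*} [AddCommGroup C] [Module k C]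

noncomputable def mulMap : A ⊗[k] A →ₗ[k] A := TensorProduct.lift H.mul

@[simp] lemma mulMap_tmul (a b : A) : H.mulMap (a ⊗ₜ b) = H.mul a b := rfl

lemma mulMap_comp_map_mulMap_id :
    H.mulMap ∘ₗ map H.mulMap LinearMap.id =
      H.mulMap ∘ₗ map LinearMap.id H.mulMap ∘ₗ (TensorProduct.assoc k A A A).toLinearMap := by
  ext a b c
  simp [H.mul_assoc]

noncomputable def convolution (δ : C →ₗ[k] C ⊗[k] C) (f g : C →ₗ[k] A) : C →ₗ[k] A :=
  H.mulMap ∘ₗ map f g ∘ₗ δ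

variable {H} {δ : C →ₗ[k] C ⊗[k] C}

lemma convolution_assoc
    (hδ : (TensorProduct.assoc k C C C).toLinearMap ∘ₗ map δ LinearMap.id ∘ₗ δ =
      map LinearMap.id δ ∘ₗ δ) (f g h : C →ₗ[k] A) :
    H.convolution δ (H.convolution δ f g) h = H.convolution δ f (H.convolution δ g h) :=
  have hleft : map (H.mulMap ∘ₗ map f g ∘ₗ δ) h =
      map H.mulMap LinearMap.id ∘ₗ map (map f g) h ∘ₗ map δ LinearMap.id := by
    simp only [← map_comp, LinearMap.id_comp, LinearMap.comp_id]
  have hright : map f (H.mulMap ∘ₗ map g h ∘ₗ δ) =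
      map LinearMap.id H.mulMap ∘ₗ map f (map g h) ∘ₗ map LinearMap.id δ := by
    simp only [← map_comp, LinearMap.id_comp, LinearMap.comp_id]
  calc H.mulMap ∘ₗ map (H.mulMap ∘ₗ map f g ∘ₗ δ) h ∘ₗ δ
      = (H.mulMap ∘ₗ map H.mulMap LinearMap.id) ∘ₗ map (map f g) h ∘ₗ map δ LinearMap.id ∘ₗ δ := by
        rw [hleft]; simp only [LinearMap.comp_assoc]
    _ = H.mulMap ∘ₗ map LinearMap.id H.mulMap ∘ₗ
          (map f (map g h) ∘ₗ (TensorProduct.assoc k C C C).toLinearMap) ∘ₗ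
            map δ LinearMap.id ∘ₗ δ := by
        rw [mulMap_comp_map_mulMap_id, map_map_comp_assoc_eq]; simp only [LinearMap.comp_assoc]
    _ = H.mulMap ∘ₗ map f (H.mulMap ∘ₗ map g h ∘ₗ δ) ∘ₗ δ := by
        rw [hright, LinearMap.comp_assoc, hδ]; simp only [LinearMap.comp_assoc]

lemma convolution_add_left (f f' g : C →ₗ[k] A) :
    H.convolution δ (f + f') g = H.convolution δ f g + H.convolution δ f' g := by
  simp only [convolution, map_add_left, LinearMap.add_comp, LinearMap.comp_add]

lemma convolution_counit_left {ε : C →ₗ[k] k}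
    (hε : (TensorProduct.lid k C).toLinearMap ∘ₗ map ε LinearMap.id ∘ₗ δ = LinearMap.id)
    (f : C →ₗ[k] A) : H.convolution δ (ε.smulRight H.one) f = f := by
  have key : H.mulMap ∘ₗ map (ε.smulRight H.one) f =
      f ∘ₗ (TensorProduct.lid k C).toLinearMap ∘ₗ map ε LinearMap.id := by
    ext x y
    simp [H.one_mul]
  rw [convolution, ← LinearMap.comp_assoc, key, LinearMap.comp_assoc, LinearMap.comp_assoc, hε,
    LinearMap.comp_id]

lemma convolution_counit_right {ε : C →ₗ[k] k}
    (hε : (TensorProduct.rid k C).toLinearMap ∘ₗ map LinearMap.id ε ∘ₗ δ = LinearMap.id)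
    (f : C →ₗ[k] A) : H.convolution δ f (ε.smulRight H.one) = f := by
  have key : H.mulMap ∘ₗ map f (ε.smulRight H.one) =
      f ∘ₗ (TensorProduct.rid k C).toLinearMap ∘ₗ map LinearMap.id ε := by
    ext x y
    simp [H.mul_one]
  rw [convolution, ← LinearMap.comp_assoc, key, LinearMap.comp_assoc, LinearMap.comp_assoc, hε,
    LinearMap.comp_id]

lemma eq_of_convolution_eq_counit {ε : C →ₗ[k] k}
    (hδ : (TensorProduct.assoc k C C C).toLinearMap ∘ₗ map δ LinearMap.id ∘ₗ δ =
      map LinearMap.id δ ∘ₗ δ)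
    (hεl : (TensorProduct.lid k C).toLinearMap ∘ₗ map ε LinearMap.id ∘ₗ δ = LinearMap.id)
    (hεr : (TensorProduct.rid k C).toLinearMap ∘ₗ map LinearMap.id ε ∘ₗ δ = LinearMap.id)
    {f g h : C →ₗ[k] A} (hfg : H.convolution δ f g = ε.smulRight H.one)
    (hgh : H.convolution δ g h = ε.smulRight H.one) : f = h := by
  rw [← convolution_counit_right hεr f, ← hgh, ← convolution_assoc hδ, hfg,
    convolution_counit_left hεl]

end Convolution

section ConvolutionComul

lemma coassoc_comp :
    (TensorProduct.assoc k A A A).toLinearMap ∘ₗ map H.comul LinearMap.id ∘ₗ H.comul =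
      map LinearMap.id H.comul ∘ₗ H.comul :=
  LinearMap.ext H.coassoc

lemma lid_counit_comp_comul :
    (TensorProduct.lid k A).toLinearMap ∘ₗ map H.counit LinearMap.id ∘ₗ H.comul = LinearMap.id :=
  LinearMap.ext H.counit_comul

lemma rid_counit_comp_comul :
    (TensorProduct.rid k A).toLinearMap ∘ₗ map LinearMap.id H.counit ∘ₗ H.comul = LinearMap.id :=
  LinearMap.ext H.comul_counit

lemma antipode_convolution_id :
    H.convolution H.comul H.antipode LinearMap.id = H.counit.smulRight H.one :=
  LinearMap.ext H.antipode_left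

lemma id_convolution_antipode :
    H.convolution H.comul LinearMap.id H.antipode = H.counit.smulRight H.one :=
  LinearMap.ext H.antipode_right

lemma eq_of_convolution_comul_eq_counit {f g h : A →ₗ[k] A}
    (hfg : H.convolution H.comul f g = H.counit.smulRight H.one)
    (hgh : H.convolution H.comul g h = H.counit.smulRight H.one) : f = h :=
  eq_of_convolution_eq_counit H.coassoc_comp H.lid_counit_comp_comul H.rid_counit_comp_comul
    hfg hgh

end ConvolutionComul

section Degree

def HasDegree (d : ZMod 2) (f : A →ₗ[k] A) : Prop :=
  ∀ (i : ZMod 2) (a : A), H.p (i + d) (f (H.p i a)) = f (H.p i a)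

noncomputable def degreePart (d : ZMod 2) (f : A →ₗ[k] A) : A →ₗ[k] A :=
  ∑ i : ZMod 2, H.p (i + d) ∘ₗ f ∘ₗ H.p i

variable {H}

lemma degreePart_apply_p (d i : ZMod 2) (f : A →ₗ[k] A) (a : A) :
    H.degreePart d f (H.p i a) = H.p (i + d) (f (H.p i a)) := by
  obtain rfl | rfl := zmod_two_cases i <;> simp [degreePart, sum_zmod_two]

lemma degreePart_zero_add_degreePart_one (f : A →ₗ[k] A) :
    H.degreePart 0 f + H.degreePart 1 f = f := by
  ext a
  simp only [degreePart, sum_zmod_two, LinearMap.add_apply, LinearMap.comp_apply,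
    show (1 + 1 : ZMod 2) = 0 by decide, zero_add, add_zero]
  rw [add_add_add_comm, H.p_zero_add_p_one, add_comm (H.p 1 _), H.p_zero_add_p_one,
    ← map_add, H.p_zero_add_p_one]

lemma hasDegree_degreePart (d : ZMod 2) (f : A →ₗ[k] A) : H.HasDegree d (H.degreePart d f) := by
  intro i a
  rw [degreePart_apply_p, p_p]

lemma hasDegree_id : H.HasDegree 0 LinearMap.id := by
  intro i a
  simp

lemma hasDegree_counit_smulRight_one : H.HasDegree 0 (H.counit.smulRight H.one) := by
  intro i a
  obtain rfl | rfl := zmod_two_cases i <;> simp [H.one_grading]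

lemma HasDegree.sub {d : ZMod 2} {f g : A →ₗ[k] A} (hf : H.HasDegree d f) (hg : H.HasDegree d g) :
    H.HasDegree d (f - g) := by
  intro i a
  simp [hf i a, hg i a]

lemma HasDegree.p_apply {f : A →ₗ[k] A} (hf : H.HasDegree 0 f) (i : ZMod 2) (a : A) :
    H.p i (f a) = f (H.p i a) := by
  conv_lhs => rw [← H.p_add_p_add_one i a, map_add, map_add]
  rw [← hf (i + 1) a, add_zero, H.p_p_of_ne (by simp), add_zero]
  simpa using hf i a

lemma HasDegree.eq_zero {d : ZMod 2} {f : A →ₗ[k] A} (hf : H.HasDegree d f)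
    (hf' : H.HasDegree (d + 1) f) : f = 0 := by
  have hp : ∀ (i : ZMod 2) (a : A), f (H.p i a) = 0 := fun i a => by
    rw [← hf' i a, ← add_assoc, ← hf i a, H.p_p_of_ne (by simp)]
  ext a
  rw [LinearMap.zero_apply, ← H.p_zero_add_p_one a, map_add, hp, hp, add_zero]

lemma p_mulMap_map_p (α β : ZMod 2) (x : A ⊗[k] A) :
    H.p (α + β) (H.mulMap (map (H.p α) (H.p β) x)) = H.mulMap (map (H.p α) (H.p β) x) := by
  induction x with
  | zero => simp
  | tmul a b => exact H.mul_grading α β a b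
  | add x y hx hy => simp only [map_add, hx, hy]

lemma HasDegree.convolution {d d' : ZMod 2} {f g : A →ₗ[k] A} (hf : H.HasDegree d f)
    (hg : H.HasDegree d' g) : H.HasDegree (d + d') (H.convolution H.comul f g) := by
  intro i a
  simp only [HopfSuperalgebra.convolution, LinearMap.comp_apply, comul_p, map_sum]
  refine Finset.sum_congr rfl fun m _ => ?_
  have hfg : map f g (map (H.p m) (H.p (i - m)) (H.comul a)) =
      map (H.p (m + d)) (H.p (i - m + d')) (map (f ∘ₗ H.p m) (g ∘ₗ H.p (i - m)) (H.comul a)) := by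
    rw [map_map, map_map]
    congr 2 <;> ext b
    exacts [(hf m b).symm, (hg (i - m) b).symm]
  rw [hfg, show i + (d + d') = m + d + (i - m + d') by ring, p_mulMap_map_p]

lemma antipode_eq_degreePart_zero : H.antipode = H.degreePart 0 H.antipode := by
  have hsum : H.convolution H.comul (H.degreePart 0 H.antipode) LinearMap.id +
      H.convolution H.comul (H.degreePart 1 H.antipode) LinearMap.id =
        H.counit.smulRight H.one := by
    rw [← convolution_add_left, degreePart_zero_add_degreePart_one, antipode_convolution_id]
  have hodd : H.convolution H.comul (H.degreePart 1 H.antipode) LinearMap.id = 0 := by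
    refine HasDegree.eq_zero (d := 0) ?_ ((hasDegree_degreePart 1 _).convolution hasDegree_id)
    rw [eq_sub_of_add_eq' hsum]
    exact hasDegree_counit_smulRight_one.sub
      (by simpa using (hasDegree_degreePart 0 _).convolution hasDegree_id)
  rw [hodd, add_zero] at hsum
  exact (H.eq_of_convolution_comul_eq_counit hsum H.id_convolution_antipode).symm

lemma p_antipode (i : ZMod 2) (a : A) : H.p i (H.antipode a) = H.antipode (H.p i a) := by
  rw [antipode_eq_degreePart_zero]
  exact (hasDegree_degreePart 0 _).p_apply i a

end Degree

section SuperTensorSquare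

variable (k) in
def superSign (i j : ZMod 2) : k := (-1) ^ (i.val * j.val)

@[simp] lemma superSign_zero_left (j : ZMod 2) : superSign k 0 j = 1 := by simp [superSign]

@[simp] lemma superSign_zero_right (i : ZMod 2) : superSign k i 0 = 1 := by simp [superSign]

@[simp] lemma superSign_one_one : superSign k 1 1 = -1 := by simp [superSign, ZMod.val_one]

lemma superSign_mul_superSign_swap (i j : ZMod 2) : superSign k i j * superSign k j i = 1 := by
  rw [superSign, superSign, ← pow_add, mul_comm j.val, ← two_mul, pow_mul]
  simp

-- Stated for `A ⊗ A` rather than a general module so that its instances match those of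
-- `comul_mul` syntactically.
lemma zsmul_eq_superSign_smul (i j : ZMod 2) (x : A ⊗[k] A) :
    ((-1 : ℤ) ^ (i.val * j.val)) • x = superSign k i j • x := by
  rw [superSign, ← Int.cast_smul_eq_zsmul k]
  push_cast
  rfl

noncomputable def superInterchange :
    (A ⊗[k] A) ⊗[k] (A ⊗[k] A) →ₗ[k] (A ⊗[k] A) ⊗[k] (A ⊗[k] A) :=
  ∑ i : ZMod 2, ∑ j : ZMod 2, superSign k i j •
    ((tensorTensorTensorComm k A A A A).toLinearMap ∘ₗ
      map (map LinearMap.id (H.p i)) (map (H.p j) LinearMap.id))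

lemma superInterchange_tmul (a b c d : A) :
    H.superInterchange ((a ⊗ₜ b) ⊗ₜ (c ⊗ₜ d)) =
      ∑ i : ZMod 2, ∑ j : ZMod 2, superSign k i j • ((a ⊗ₜ H.p j c) ⊗ₜ (H.p i b ⊗ₜ d)) := by
  simp [superInterchange]

noncomputable def tensorComul : A ⊗[k] A →ₗ[k] (A ⊗[k] A) ⊗[k] (A ⊗[k] A) :=
  H.superInterchange ∘ₗ map H.comul H.comul

noncomputable def tensorCounit : A ⊗[k] A →ₗ[k] k :=
  LinearMap.mul' k k ∘ₗ map H.counit H.counit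

noncomputable def comulRight (i : ZMod 2) : A →ₗ[k] A ⊗[k] A := map LinearMap.id (H.p i) ∘ₗ H.comul

noncomputable def comulLeft (j : ZMod 2) : A →ₗ[k] A ⊗[k] A := map (H.p j) LinearMap.id ∘ₗ H.comul

lemma tensorComul_tmul (a b : A) :
    H.tensorComul (a ⊗ₜ b) = ∑ i : ZMod 2, ∑ j : ZMod 2, superSign k i j •
      tensorTensorTensorComm k A A A A (H.comulRight i a ⊗ₜ H.comulLeft j b) := by
  simp [tensorComul, superInterchange, comulRight, comulLeft]

lemma lid_tensorCounit_comp_superInterchange :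
    (TensorProduct.lid k (A ⊗[k] A)).toLinearMap ∘ₗ map H.tensorCounit LinearMap.id ∘ₗ
        H.superInterchange =
      map ((TensorProduct.lid k A).toLinearMap ∘ₗ map H.counit LinearMap.id)
        ((TensorProduct.lid k A).toLinearMap ∘ₗ map H.counit LinearMap.id) := by
  apply TensorProduct.ext_fourfold'
  intro a b c d
  simp [superInterchange, sum_zmod_two, tensorCounit, smul_tmul', ← add_tmul, smul_smul,
    mul_comm, ← smul_add, p_zero_add_p_one]

lemma rid_tensorCounit_comp_superInterchange :
    (TensorProduct.rid k (A ⊗[k] A)).toLinearMap ∘ₗ map LinearMap.id H.tensorCounit ∘ₗ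
        H.superInterchange =
      map ((TensorProduct.rid k A).toLinearMap ∘ₗ map LinearMap.id H.counit)
        ((TensorProduct.rid k A).toLinearMap ∘ₗ map LinearMap.id H.counit) := by
  apply TensorProduct.ext_fourfold'
  intro a b c d
  simp [superInterchange, sum_zmod_two, tensorCounit, smul_tmul', ← tmul_add, smul_smul,
    mul_comm, p_zero_add_p_one]

lemma lid_tensorCounit_comp_tensorComul :
    (TensorProduct.lid k (A ⊗[k] A)).toLinearMap ∘ₗ map H.tensorCounit LinearMap.id ∘ₗ
      H.tensorComul = LinearMap.id := by
  calc _ = ((TensorProduct.lid k (A ⊗[k] A)).toLinearMap ∘ₗ map H.tensorCounit LinearMap.id ∘ₗ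
        H.superInterchange) ∘ₗ map H.comul H.comul := by
        simp only [tensorComul, LinearMap.comp_assoc]
    _ = LinearMap.id := by
        rw [lid_tensorCounit_comp_superInterchange, ← map_comp, LinearMap.comp_assoc,
          lid_counit_comp_comul, map_id]

lemma rid_tensorCounit_comp_tensorComul :
    (TensorProduct.rid k (A ⊗[k] A)).toLinearMap ∘ₗ map LinearMap.id H.tensorCounit ∘ₗ
      H.tensorComul = LinearMap.id := by
  calc _ = ((TensorProduct.rid k (A ⊗[k] A)).toLinearMap ∘ₗ map LinearMap.id H.tensorCounit ∘ₗ
        H.superInterchange) ∘ₗ map H.comul H.comul := by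
        simp only [tensorComul, LinearMap.comp_assoc]
    _ = LinearMap.id := by
        rw [rid_tensorCounit_comp_superInterchange, ← map_comp, LinearMap.comp_assoc,
          rid_counit_comp_comul, map_id]

end SuperTensorSquare

section Coassoc

noncomputable def doubleComul : A →ₗ[k] A ⊗[k] (A ⊗[k] A) := map LinearMap.id H.comul ∘ₗ H.comul

variable (k A) in
noncomputable def interleave : (A ⊗[k] (A ⊗[k] A)) ⊗[k] (A ⊗[k] (A ⊗[k] A)) →ₗ[k]
    (A ⊗[k] A) ⊗[k] ((A ⊗[k] A) ⊗[k] (A ⊗[k] A)) :=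
  map LinearMap.id (tensorTensorTensorComm k A A A A).toLinearMap ∘ₗ
    (tensorTensorTensorComm k A (A ⊗[k] A) A (A ⊗[k] A)).toLinearMap

@[simp] lemma interleave_tmul (x₁ y₁ : A) (x y : A ⊗[k] A) :
    interleave k A ((x₁ ⊗ₜ x) ⊗ₜ (y₁ ⊗ₜ y)) =
      (x₁ ⊗ₜ y₁) ⊗ₜ tensorTensorTensorComm k A A A A (x ⊗ₜ y) := rfl

variable (k A) in
lemma assoc_comp_map_tensorTensorTensorComm :
    (TensorProduct.assoc k (A ⊗[k] A) (A ⊗[k] A) (A ⊗[k] A)).toLinearMap ∘ₗ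
        map (tensorTensorTensorComm k A A A A).toLinearMap LinearMap.id ∘ₗ
          (tensorTensorTensorComm k (A ⊗[k] A) A (A ⊗[k] A) A).toLinearMap =
      interleave k A ∘ₗ map (TensorProduct.assoc k A A A).toLinearMap
        (TensorProduct.assoc k A A A).toLinearMap := by
  ext x₁ x₂ x₃ y₁ y₂ y₃
  rfl

lemma assoc_tensorTensorTensorComm_tmul (X Y : A ⊗[k] A) (x y : A) :
    TensorProduct.assoc k (A ⊗[k] A) (A ⊗[k] A) (A ⊗[k] A)
        (tensorTensorTensorComm k A A A A (X ⊗ₜ Y) ⊗ₜ (x ⊗ₜ y)) =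
      interleave k A
        (TensorProduct.assoc k A A A (X ⊗ₜ x) ⊗ₜ TensorProduct.assoc k A A A (Y ⊗ₜ y)) :=
  LinearMap.congr_fun (assoc_comp_map_tensorTensorTensorComm k A) ((X ⊗ₜ x) ⊗ₜ (Y ⊗ₜ y))

lemma p_comp_p (i : ZMod 2) : H.p i ∘ₗ H.p i = H.p i := LinearMap.ext (H.p_p i)

lemma map_id_p_comp_comul_comp_p (i u : ZMod 2) :
    map LinearMap.id (H.p u) ∘ₗ H.comul ∘ₗ H.p i = map (H.p (i + u)) (H.p u) ∘ₗ H.comul := by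
  rw [H.comul_grading i]
  obtain rfl | rfl := zmod_two_cases i <;> obtain rfl | rfl := zmod_two_cases u <;>
    simp [sum_zmod_two, LinearMap.comp_add, ← LinearMap.comp_assoc, ← map_comp, p_comp_p,
      H.p_orth 0 1 (by decide), H.p_orth 1 0 (by decide), show (1 + 1 : ZMod 2) = 0 by decide]

lemma map_p_id_comp_comul_comp_p (j v : ZMod 2) :
    map (H.p v) LinearMap.id ∘ₗ H.comul ∘ₗ H.p j = map (H.p v) (H.p (j + v)) ∘ₗ H.comul := by
  rw [H.comul_grading j]
  obtain rfl | rfl := zmod_two_cases j <;> obtain rfl | rfl := zmod_two_cases v <;>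
    simp [sum_zmod_two, LinearMap.comp_add, ← LinearMap.comp_assoc, ← map_comp, p_comp_p,
      H.p_orth 0 1 (by decide), H.p_orth 1 0 (by decide), show (1 + 1 : ZMod 2) = 0 by decide]

lemma map_id_comulRight_comulRight (i m : ZMod 2) (a : A) :
    map LinearMap.id (H.comulRight m) (H.comulRight i a) =
      map LinearMap.id (map (H.p (i + m)) (H.p m)) (H.doubleComul a) := by
  simp only [comulRight, doubleComul, LinearMap.comp_apply, map_map, LinearMap.id_comp,
    LinearMap.comp_assoc, map_id_p_comp_comul_comp_p]

lemma map_id_comulLeft_comulLeft (j n : ZMod 2) (b : A) :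
    map LinearMap.id (H.comulLeft n) (H.comulLeft j b) =
      map (H.p j) (map (H.p n) LinearMap.id) (H.doubleComul b) := by
  simp only [comulLeft, doubleComul, LinearMap.comp_apply, map_map, LinearMap.id_comp,
    LinearMap.comp_id]

lemma assoc_map_comulRight_id_comulRight (i m : ZMod 2) (a : A) :
    TensorProduct.assoc k A A A (map (H.comulRight m) LinearMap.id (H.comulRight i a)) =
      map LinearMap.id (map (H.p m) (H.p i)) (H.doubleComul a) := by
  rw [doubleComul, LinearMap.comp_apply, ← H.coassoc, map_map_assoc]
  simp only [comulRight, LinearMap.comp_apply, map_map, LinearMap.id_comp, LinearMap.comp_id]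

lemma assoc_map_comulLeft_id_comulLeft (j n : ZMod 2) (b : A) :
    TensorProduct.assoc k A A A (map (H.comulLeft n) LinearMap.id (H.comulLeft j b)) =
      map (H.p n) (map (H.p (j + n)) LinearMap.id) (H.doubleComul b) := by
  rw [doubleComul, LinearMap.comp_apply, ← H.coassoc, map_map_assoc]
  simp only [comulLeft, LinearMap.comp_apply, map_map, LinearMap.comp_id, LinearMap.comp_assoc,
    map_p_id_comp_comul_comp_p]

lemma map_id_tensorComul_tensorTensorTensorComm (X Y : A ⊗[k] A) :
    map LinearMap.id H.tensorComul (tensorTensorTensorComm k A A A A (X ⊗ₜ Y)) =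
      ∑ m : ZMod 2, ∑ n : ZMod 2, superSign k m n •
        interleave k A
          (map LinearMap.id (H.comulRight m) X ⊗ₜ map LinearMap.id (H.comulLeft n) Y) := by
  induction X with
  | zero => simp
  | add X X' hX hX' => simp [add_tmul, hX, hX', Finset.sum_add_distrib, smul_add]
  | tmul x₁ x₂ =>
    induction Y with
    | zero => simp
    | add Y Y' hY hY' => simp [tmul_add, hY, hY', Finset.sum_add_distrib, smul_add]
    | tmul y₁ y₂ => simp [tensorComul_tmul, tmul_sum, tmul_smul]

lemma assoc_map_tensorComul_id_tensorTensorTensorComm (X Y : A ⊗[k] A) :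
    TensorProduct.assoc k (A ⊗[k] A) (A ⊗[k] A) (A ⊗[k] A)
        (map H.tensorComul LinearMap.id (tensorTensorTensorComm k A A A A (X ⊗ₜ Y))) =
      ∑ m : ZMod 2, ∑ n : ZMod 2, superSign k m n •
        interleave k A (TensorProduct.assoc k A A A (map (H.comulRight m) LinearMap.id X) ⊗ₜ
          TensorProduct.assoc k A A A (map (H.comulLeft n) LinearMap.id Y)) := by
  induction X with
  | zero => simp
  | add X X' hX hX' => simp [add_tmul, hX, hX', Finset.sum_add_distrib, smul_add]
  | tmul x₁ x₂ =>
    induction Y with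
    | zero => simp
    | add Y Y' hY hY' => simp [tmul_add, hY, hY', Finset.sum_add_distrib, smul_add]
    | tmul y₁ y₂ =>
      simp [tensorComul_tmul, sum_tmul, ← smul_tmul', assoc_tensorTensorTensorComm_tmul]

lemma sum_superSign_reindex {M : Type*} [AddCommGroup M] [Module k M]
    (F : ZMod 2 → ZMod 2 → ZMod 2 → ZMod 2 → M) :
    ∑ i : ZMod 2, ∑ j : ZMod 2, superSign k i j •
        ∑ m : ZMod 2, ∑ n : ZMod 2, superSign k m n • F m i n (j + n) =
      ∑ i : ZMod 2, ∑ j : ZMod 2, superSign k i j •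
        ∑ m : ZMod 2, ∑ n : ZMod 2, superSign k m n • F (i + m) m j n := by
  simp only [sum_zmod_two, superSign_zero_left, superSign_zero_right, superSign_one_one,
    smul_add, one_smul, neg_smul, smul_neg, neg_neg, show (1 + 1 : ZMod 2) = 0 by decide,
    zero_add, add_zero]
  abel

/- Both sides send `a ⊗ b` to `Σ ± (a₁ ⊗ b₁) ⊗ ((a₂ ⊗ b₂) ⊗ (a₃ ⊗ b₃))` with the sign
`(-1)^{|a₂||b₁| + |a₃||b₁| + |a₃||b₂|}`; they only index the parities of `a₂, a₃, b₁, b₂`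
differently, which `sum_superSign_reindex` reconciles. -/
theorem tensorComul_coassoc :
    (TensorProduct.assoc k (A ⊗[k] A) (A ⊗[k] A) (A ⊗[k] A)).toLinearMap ∘ₗ
        map H.tensorComul LinearMap.id ∘ₗ H.tensorComul =
      map LinearMap.id H.tensorComul ∘ₗ H.tensorComul := by
  apply TensorProduct.ext'
  intro a b
  have h := sum_superSign_reindex (k := k) fun α β u v =>
    interleave k A (map LinearMap.id (map (H.p α) (H.p β)) (H.doubleComul a) ⊗ₜ
      map (H.p u) (map (H.p v) LinearMap.id) (H.doubleComul b))
  simpa [tensorComul_tmul, assoc_map_tensorComul_id_tensorTensorTensorComm,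
    assoc_map_comulRight_id_comulRight, assoc_map_comulLeft_id_comulLeft,
    map_id_tensorComul_tensorTensorTensorComm, map_id_comulRight_comulRight,
    map_id_comulLeft_comulLeft] using h

end Coassoc

section Antipode

lemma homTensorHomMap_map_mul_mul (u v : A ⊗[k] A) :
    homTensorHomMap (RingHom.id k) A A A A (map H.mul H.mul u) v =
      map H.mulMap H.mulMap (tensorTensorTensorComm k A A A A (u ⊗ₜ v)) := by
  induction u with
  | zero => simp
  | add u u' hu hu' => simp only [add_tmul, map_add, LinearMap.add_apply, hu, hu']
  | tmul a b =>
    induction v with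
    | zero => simp
    | add v v' hv hv' => simp only [tmul_add, map_add, hv, hv']
    | tmul c d => simp

lemma comul_comp_mulMap : H.comul ∘ₗ H.mulMap = map H.mulMap H.mulMap ∘ₗ H.tensorComul := by
  apply TensorProduct.ext'
  intro a b
  rw [LinearMap.comp_apply, mulMap_tmul, H.comul_mul]
  simp only [zsmul_eq_superSign_smul]
  simp [homTensorHomMap_map_mul_mul, tensorComul_tmul, comulRight, comulLeft]

lemma convolution_tensorComul_comp_mulMap (f g : A →ₗ[k] A) :
    H.convolution H.tensorComul (f ∘ₗ H.mulMap) (g ∘ₗ H.mulMap) =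
      H.convolution H.comul f g ∘ₗ H.mulMap := by
  simp only [convolution, map_comp, LinearMap.comp_assoc, comul_comp_mulMap]

lemma counit_smulRight_one_comp_mulMap :
    H.counit.smulRight H.one ∘ₗ H.mulMap = H.tensorCounit.smulRight H.one := by
  apply TensorProduct.ext'
  intro a b
  simp [tensorCounit, H.counit_mul]

lemma mulMap_convolution_antipode_comp_mulMap :
    H.convolution H.tensorComul H.mulMap (H.antipode ∘ₗ H.mulMap) =
      H.tensorCounit.smulRight H.one := by
  simpa [id_convolution_antipode, counit_smulRight_one_comp_mulMap] using
    H.convolution_tensorComul_comp_mulMap LinearMap.id H.antipode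

variable {H}

lemma mul_antipode_p_comm (hsc : H.IsSupercommutative) (i j : ZMod 2) (a b : A) :
    H.mul (H.antipode (H.p j b)) (H.p i a) =
      superSign k j i • H.mul (H.p i a) (H.antipode (H.p j b)) := by
  have h := hsc j i (H.antipode (H.p j b)) (H.p i a)
  rw [p_antipode, p_p, p_p, ← Int.cast_smul_eq_zsmul k] at h
  rw [h, superSign]
  push_cast
  rfl

lemma mulMap_map_antipode_comp_superInterchange (hsc : H.IsSupercommutative) :
    H.mulMap ∘ₗ map (H.mulMap ∘ₗ map H.antipode H.antipode) H.mulMap ∘ₗ H.superInterchange =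
      H.mulMap ∘ₗ map (H.mulMap ∘ₗ map H.antipode LinearMap.id)
        (H.mulMap ∘ₗ map H.antipode LinearMap.id) := by
  apply TensorProduct.ext_fourfold'
  intro a₁ a₂ b₁ b₂
  have hterm : ∀ i j : ZMod 2, superSign k i j •
      H.mul (H.mul (H.antipode a₁) (H.antipode (H.p j b₁))) (H.mul (H.p i a₂) b₂) =
        H.mul (H.mul (H.antipode a₁) (H.p i a₂)) (H.mul (H.antipode (H.p j b₁)) b₂) := by
    intro i j
    calc _ = superSign k i j • H.mul (H.antipode a₁)
          (H.mul (H.mul (H.antipode (H.p j b₁)) (H.p i a₂)) b₂) := by simp only [H.mul_assoc]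
      _ = H.mul (H.antipode a₁) (H.mul (H.mul (H.p i a₂) (H.antipode (H.p j b₁))) b₂) := by
        rw [mul_antipode_p_comm hsc, map_smul, LinearMap.smul_apply, map_smul, smul_smul,
          superSign_mul_superSign_swap, one_smul]
      _ = _ := by simp only [H.mul_assoc]
  simp only [LinearMap.comp_apply, superInterchange_tmul, map_sum, map_smul, map_tmul,
    mulMap_tmul, LinearMap.id_apply, hterm]
  simp only [sum_zmod_two]
  simp only [← map_add, ← LinearMap.add_apply, H.p_sum, LinearMap.id_apply]

lemma mulMap_map_antipode_convolution_mulMap (hsc : H.IsSupercommutative) :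
    H.convolution H.tensorComul (H.mulMap ∘ₗ map H.antipode H.antipode) H.mulMap =
      H.tensorCounit.smulRight H.one := by
  calc _ = (H.mulMap ∘ₗ map (H.mulMap ∘ₗ map H.antipode H.antipode) H.mulMap ∘ₗ
        H.superInterchange) ∘ₗ map H.comul H.comul := by
        simp only [convolution, tensorComul, LinearMap.comp_assoc]
    _ = H.mulMap ∘ₗ map (H.convolution H.comul H.antipode LinearMap.id)
          (H.convolution H.comul H.antipode LinearMap.id) := by
        rw [mulMap_map_antipode_comp_superInterchange hsc]
        simp only [convolution, LinearMap.comp_assoc, map_comp]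
    _ = _ := by
        rw [antipode_convolution_id]
        apply TensorProduct.ext'
        intro a b
        simp [tensorCounit, H.mul_one, smul_smul, mul_comm]

lemma antipode_comp_mulMap (hsc : H.IsSupercommutative) :
    H.antipode ∘ₗ H.mulMap = H.mulMap ∘ₗ map H.antipode H.antipode :=
  (eq_of_convolution_eq_counit H.tensorComul_coassoc H.lid_tensorCounit_comp_tensorComul
    H.rid_tensorCounit_comp_tensorComul (mulMap_map_antipode_convolution_mulMap hsc)
    H.mulMap_convolution_antipode_comp_mulMap).symm

lemma antipode_one : H.antipode H.one = H.one := by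
  simpa [H.comul_one, H.mul_one, H.counit_one] using H.antipode_left H.one

theorem antipode_antipode (hsc : H.IsSupercommutative) (a : A) :
    H.antipode (H.antipode a) = a := by
  have hss : H.convolution H.comul H.antipode (H.antipode ∘ₗ H.antipode) =
      H.counit.smulRight H.one :=
    calc _ = (H.mulMap ∘ₗ map H.antipode H.antipode) ∘ₗ map LinearMap.id H.antipode ∘ₗ H.comul := by
          rw [convolution, ← LinearMap.comp_id H.antipode, map_comp, LinearMap.comp_id]
          simp only [LinearMap.comp_assoc]
      _ = H.antipode ∘ₗ H.convolution H.comul LinearMap.id H.antipode := by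
          rw [← antipode_comp_mulMap hsc]
          simp only [convolution, LinearMap.comp_assoc]
      _ = _ := by
          rw [id_convolution_antipode]
          ext b
          simp [antipode_one]
  exact LinearMap.congr_fun
    (H.eq_of_convolution_comul_eq_counit H.id_convolution_antipode hss).symm a

end Antipode

section Bosonization

def parity : A →ₗ[k] A := H.p 0 - H.p 1

variable {H}

lemma parity_parity (a : A) : H.parity (H.parity a) = a := by
  simp [parity, p_zero_add_p_one]

lemma hatAntipode_hatAntipode (hsc : H.IsSupercommutative) (x : A × A) :
    H.hatAntipode (H.hatAntipode x) = (H.parity x.1, H.parity x.2) := by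
  simp [hatAntipode, parity, p_antipode, antipode_antipode hsc, sub_eq_add_neg, add_comm]

end Bosonization

end HopfSuperalgebra

/-- Let `A` be a super-commutative Hopf superalgebra over a field.  Then the
antipode `s` of `A` is an involution, and consequently the antipode `S` of the
bosonization `Â = A ⋊ kZ₂`, given by
`S(a ⊗ σ^i) = (−1)^{i+|a|} s(a) ⊗ σ^{i+|a|}`, is bijective. -/
theorem stmt19 {k A : Type*} [Field k] [AddCommGroup A] [Module k A]
    (H : HopfSuperalgebra k A) (hsc : H.IsSupercommutative) :
    (∀ a : A, H.antipode (H.antipode a) = a) ∧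
      Function.Bijective H.hatAntipode := by
  have h : Function.Involutive (H.hatAntipode ∘ H.hatAntipode) := fun x => by
    simp [hatAntipode_hatAntipode hsc, parity_parity]
  exact ⟨antipode_antipode hsc, h.injective.of_comp, h.surjective.of_comp⟩
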